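/- arXiv:2106.04347 — 2 statements merged into one kernel-verified Lean document; each statement's English description precedes it below -/
import Mathlib

section
/- Let n ≥ 1, N ≥ 1 and m ≥ 0 be integers. Consider the set of pairs (P, S) where P is a multiset of cardinality m on an N-element set containing a distinguished element 0 (say {0,1,…,N−1}), and S = (a_1,b_1)(a_2,b_2)⋯(a_n,b_n) is a sequence of n pairs such that for each i, a_i is an element of P and b_i is a positive integer not larger than the number of occurrences of a_i in P, and a_n = 0. Then the number of such pairs equals (m^n/N)·C(N−1+m, m), equivalently N times the number of such pairs equals m^n·C(N−1+m, m). -/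
open Finset

-- card of {b | 1 ≤ b ≤ k} is k
private instance aux_finite_interval (k : ℕ) : Finite {b : ℕ // 1 ≤ b ∧ b ≤ k} :=
  (Set.finite_Icc 1 k).to_subtype

private lemma aux_card_interval (k : ℕ) : Nat.card {b : ℕ // 1 ≤ b ∧ b ≤ k} = k := by
  have e : {b : ℕ // 1 ≤ b ∧ b ≤ k} ≃ Fin k :=
    { toFun := fun b => ⟨b.1 - 1, by omega⟩
      invFun := fun j => ⟨j.1 + 1, by omega⟩
      left_inv := fun b => Subtype.ext (by have := b.2; simp; omega)
      right_inv := fun j => by ext; simp }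
  rw [Nat.card_congr e, Nat.card_eq_fintype_card, Fintype.card_fin]

private lemma aux_card_sigma {α : Type*} [Fintype α] (f : α → Type*) [∀ a, Finite (f a)] :
    Nat.card (Σ a, f a) = ∑ a, Nat.card (f a) := by
  letI : ∀ a, Fintype (f a) := fun a => Fintype.ofFinite (f a)
  simp [Nat.card_eq_fintype_card]

-- weighted pairs card
private lemma aux_card_pairs {N : ℕ} (P : Fin N → ℕ) :
    Nat.card {p : Fin N × ℕ // 1 ≤ p.2 ∧ p.2 ≤ P p.1} = ∑ a, P a := by
  have e : {p : Fin N × ℕ // 1 ≤ p.2 ∧ p.2 ≤ P p.1} ≃ Σ a : Fin N, {b : ℕ // 1 ≤ b ∧ b ≤ P a} :=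
    { toFun := fun q => ⟨q.1.1, ⟨q.1.2, q.2⟩⟩
      invFun := fun s => ⟨(s.1, s.2.1), s.2.2⟩
      left_inv := fun q => rfl
      right_inv := fun s => rfl }
  rw [Nat.card_congr e, aux_card_sigma]
  simp [aux_card_interval]

example (n N m : ℕ) (hn : 1 ≤ n) (hN : 1 ≤ N) : True := trivial

private instance aux_finite_V (N m : ℕ) : Finite {P : Fin N → ℕ // ∑ x, P x = m} := by
  apply Finite.of_injective (fun P : {P : Fin N → ℕ // ∑ x, P x = m} =>
    (fun a => (⟨P.1 a, by
      have h1 : P.1 a ≤ ∑ x, P.1 x :=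
        Finset.single_le_sum (fun i _ => Nat.zero_le _) (Finset.mem_univ a)
      rw [P.2] at h1; omega⟩ : Fin (m + 1))))
  intro P Q h
  ext a
  exact congrArg Fin.val (congrFun h a)

noncomputable instance aux_fintype_V (N m : ℕ) : Fintype {P : Fin N → ℕ // ∑ x, P x = m} :=
  Fintype.ofFinite _

private lemma aux_card_V (N m : ℕ) :
    Nat.card {P : Fin N → ℕ // ∑ x, P x = m} = (N + m - 1).choose m := by
  classical
  let e : Multiset (Fin N) ≃ (Fin N → ℕ) :=
    Multiset.toFinsupp.toEquiv.trans Finsupp.equivFunOnFinite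
  have he : ∀ s : Multiset (Fin N), ∑ a, e s a = Multiset.card s := by
    intro s
    have h : ∀ a, e s a = s.count a := fun a => rfl
    simp_rw [h]
    rw [← Multiset.toFinset_sum_count_eq s]
    exact (Finset.sum_subset (Finset.subset_univ _) (fun x _ hx => by
      simpa [Multiset.count_eq_zero] using hx)).symm
  have E : Sym (Fin N) m ≃ {P : Fin N → ℕ // ∑ x, P x = m} :=
    Equiv.subtypeEquiv e (fun s => by rw [he s])
  rw [← Nat.card_congr E, Nat.card_eq_fintype_card, Sym.card_sym_eq_choose, Fintype.card_fin]

private lemma aux_sum_swap (N m : ℕ) (hN : 1 ≤ N) (x : Fin N) :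
    ∑ P : {P : Fin N → ℕ // ∑ y, P y = m}, P.1 x =
      ∑ P : {P : Fin N → ℕ // ∑ y, P y = m}, P.1 ⟨0, hN⟩ := by
  set z : Fin N := ⟨0, hN⟩
  set σ := Equiv.swap z x with hσ
  have hf : ∀ P : {P : Fin N → ℕ // ∑ y, P y = m}, ∑ y, P.1 (σ y) = m := by
    intro P; rw [Equiv.sum_comp σ P.1]; exact P.2
  let e : {P : Fin N → ℕ // ∑ y, P y = m} ≃ {P : Fin N → ℕ // ∑ y, P y = m} :=
    { toFun := fun P => ⟨fun y => P.1 (σ y), hf P⟩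
      invFun := fun P => ⟨fun y => P.1 (σ y), hf P⟩
      left_inv := fun P => by ext y; simp [σ, Equiv.swap_apply_self]
      right_inv := fun P => by ext y; simp [σ, Equiv.swap_apply_self] }
  calc ∑ P : {P : Fin N → ℕ // ∑ y, P y = m}, P.1 x
      = ∑ P : {P : Fin N → ℕ // ∑ y, P y = m}, (e P).1 z := by
        apply Finset.sum_congr rfl; intro P _
        show P.1 x = P.1 (σ z); rw [hσ, Equiv.swap_apply_left]
    _ = ∑ P : {P : Fin N → ℕ // ∑ y, P y = m}, P.1 z := Equiv.sum_comp e (fun P : {P : Fin N → ℕ // ∑ y, P y = m} => (P : Fin N → ℕ) z)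

private lemma aux_key (N m : ℕ) (hN : 1 ≤ N) :
    N * ∑ P : {P : Fin N → ℕ // ∑ x, P x = m}, P.1 ⟨0, hN⟩ =
      m * (N - 1 + m).choose m := by
  have h1 : ∑ x : Fin N, ∑ P : {P : Fin N → ℕ // ∑ y, P y = m}, P.1 x =
      N * ∑ P : {P : Fin N → ℕ // ∑ y, P y = m}, P.1 ⟨0, hN⟩ := by
    rw [Finset.sum_congr rfl (fun x _ => aux_sum_swap N m hN x), Finset.sum_const,
      Finset.card_univ, Fintype.card_fin, smul_eq_mul]
  have h2 : ∑ x : Fin N, ∑ P : {P : Fin N → ℕ // ∑ y, P y = m}, P.1 x =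
      ∑ P : {P : Fin N → ℕ // ∑ y, P y = m}, ∑ x, P.1 x := Finset.sum_comm
  have h3 : ∑ P : {P : Fin N → ℕ // ∑ y, P y = m}, ∑ x, P.1 x =
      m * (N - 1 + m).choose m := by
    have h4 : ∑ P : {P : Fin N → ℕ // ∑ y, P y = m}, ∑ x, P.1 x =
        ∑ _P : {P : Fin N → ℕ // ∑ y, P y = m}, m :=
      Finset.sum_congr rfl (fun P _ => P.2)
    rw [h4]
    rw [Finset.sum_const]
    rw [Finset.card_univ]
    rw [smul_eq_mul]
    have h5 := (Nat.card_eq_fintype_card (α := {P : Fin N → ℕ // ∑ y, P y = m})).symm.trans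
      (aux_card_V N m)
    rw [h5]
    rw [Nat.sub_add_comm hN, mul_comm]
  rw [← h1, h2, h3]

private def CFib (n N : ℕ) (hN : 0 < N) (P : Fin N → ℕ) (i : Fin n) : Type :=
  {p : Fin N × ℕ // (1 ≤ p.2 ∧ p.2 ≤ P p.1) ∧ ((i : ℕ) = n - 1 → p.1 = ⟨0, hN⟩)}

private instance instFiniteCFib (n N : ℕ) (hN : 0 < N) (P : Fin N → ℕ) (i : Fin n) :
    Finite (CFib n N hN P i) := by
  apply Finite.of_injective (fun p : CFib n N hN P i =>
    ((p.1.1, ⟨p.1.2, by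
      have h1 : P p.1.1 ≤ Finset.univ.sup P := Finset.le_sup (Finset.mem_univ _)
      have h2 := p.2.1.2
      omega⟩) : Fin N × Fin (Finset.univ.sup P + 1)))
  intro p q h
  apply Subtype.ext
  have h1 := congrArg Prod.fst h
  have h2 := congrArg (fun r : Fin N × Fin (Finset.univ.sup P + 1) => (r.2 : ℕ)) h
  simp at h1 h2
  exact Prod.ext h1 h2

private lemma card_CFib_ne (n N : ℕ) (hN : 0 < N) (P : Fin N → ℕ) (i : Fin n)
    (h : (i : ℕ) ≠ n - 1) : Nat.card (CFib n N hN P i) = ∑ a, P a := by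
  have e : CFib n N hN P i ≃ {p : Fin N × ℕ // 1 ≤ p.2 ∧ p.2 ≤ P p.1} :=
    Equiv.subtypeEquivRight (fun p => by simp [h])
  rw [Nat.card_congr e, aux_card_pairs]

private lemma card_CFib_eq (n N : ℕ) (hN : 0 < N) (P : Fin N → ℕ) (i : Fin n)
    (h : (i : ℕ) = n - 1) : Nat.card (CFib n N hN P i) = P ⟨0, hN⟩ := by
  have e : CFib n N hN P i ≃ {b : ℕ // 1 ≤ b ∧ b ≤ P ⟨0, hN⟩} :=
    { toFun := fun q => ⟨q.1.2, by
        have h0 := q.2.2 h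
        have h1 := q.2.1
        rw [h0] at h1
        exact h1⟩
      invFun := fun b => ⟨(⟨0, hN⟩, b.1), ⟨b.2, fun _ => rfl⟩⟩
      left_inv := fun q => Subtype.ext (Prod.ext (q.2.2 h).symm rfl)
      right_inv := fun b => rfl }
  rw [Nat.card_congr e, aux_card_interval]

private lemma card_W (n N m : ℕ) (hn : 1 ≤ n) (hN : 0 < N) (P : Fin N → ℕ)
    (hP : ∑ a, P a = m) :
    Nat.card (∀ i : Fin n, CFib n N hN P i) = m ^ (n - 1) * P ⟨0, hN⟩ := by
  rw [Nat.card_pi]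
  set c : Fin n → ℕ := fun i => Nat.card (CFib n N hN P i) with hc
  set last : Fin n := ⟨n - 1, by omega⟩
  rw [← Finset.mul_prod_erase Finset.univ c (Finset.mem_univ last)]
  have h1 : c last = P ⟨0, hN⟩ := card_CFib_eq n N hN P last rfl
  have h2 : ∏ i ∈ Finset.univ.erase last, c i = m ^ (n - 1) := by
    rw [Finset.prod_congr rfl (fun i hi => ?_), Finset.prod_const,
      Finset.card_erase_of_mem (Finset.mem_univ _), Finset.card_univ, Fintype.card_fin]
    have hne : i ≠ last := (Finset.mem_erase.mp hi).1
    have : (i : ℕ) ≠ n - 1 := fun h => hne (Fin.ext h)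
    show Nat.card (CFib n N hN P i) = m
    rw [card_CFib_ne n N hN P i this, hP]
  rw [h1, h2, mul_comm]

/-- the number of pairs `(P, S)`, where `P` is an `m`-multiset on an
`N`-element set containing a distinguished element `0`, and
`S = (a_1,b_1)⋯(a_n,b_n)` with `a_i ∈ P`, `1 ≤ b_i ≤` (multiplicity of `a_i` in `P`)
and `a_n = 0`, equals `(m^n / N)·C(N−1+m, m)`. -/
theorem count_pairs_multiset_sequence (n N m : ℕ) (hn : 1 ≤ n) (hN : 1 ≤ N) :
    N * Nat.card {PS : (Fin N → ℕ) × (Fin n → Fin N × ℕ) //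
        (∑ x, PS.1 x) = m ∧
        (∀ i, 1 ≤ (PS.2 i).2 ∧ (PS.2 i).2 ≤ PS.1 (PS.2 i).1) ∧
        (PS.2 ⟨n - 1, by omega⟩).1 = ⟨0, by omega⟩} =
      m ^ n * (N - 1 + m).choose m := by
  classical
  have hN' : 0 < N := hN
  have E : {PS : (Fin N → ℕ) × (Fin n → Fin N × ℕ) //
        (∑ x, PS.1 x) = m ∧
        (∀ i, 1 ≤ (PS.2 i).2 ∧ (PS.2 i).2 ≤ PS.1 (PS.2 i).1) ∧
        (PS.2 ⟨n - 1, by omega⟩).1 = ⟨0, by omega⟩} ≃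
      Σ P : {P : Fin N → ℕ // ∑ x, P x = m}, ∀ i : Fin n, CFib n N hN' P.1 i :=
    { toFun := fun x => ⟨⟨x.1.1, x.2.1⟩, fun i => ⟨x.1.2 i, ⟨x.2.2.1 i, fun hi => by
        have hi' : i = ⟨n - 1, by omega⟩ := Fin.ext hi
        rw [hi']; exact x.2.2.2⟩⟩⟩
      invFun := fun s => ⟨⟨s.1.1, fun i => (s.2 i).1⟩, s.1.2, fun i => (s.2 i).2.1,
        (s.2 ⟨n - 1, by omega⟩).2.2 rfl⟩
      left_inv := fun x => rfl
      right_inv := fun s => rfl }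
  rw [Nat.card_congr E, aux_card_sigma]
  have h6 : ∑ P : {P : Fin N → ℕ // ∑ x, P x = m},
        Nat.card (∀ i : Fin n, CFib n N hN' P.1 i) =
      ∑ P : {P : Fin N → ℕ // ∑ x, P x = m}, m ^ (n - 1) * P.1 ⟨0, hN'⟩ :=
    Finset.sum_congr rfl (fun P _ => card_W n N m hn hN' P.1 P.2)
  rw [h6, ← Finset.mul_sum, mul_left_comm, aux_key N m hN, ← mul_assoc, ← pow_succ]
  have h7 : n - 1 + 1 = n := Nat.succ_pred_eq_of_pos hn
  rw [h7]
end

section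
/- Let n ≥ 1, N ≥ 1, m ≥ 1 and 1 ≤ ℓ ≤ m be integers. Among the pairs (P, S), where P is a multiset of cardinality m on an N-element set containing a distinguished element 0 and S = (a_1,b_1)⋯(a_n,b_n) is a sequence of n pairs with each a_i an element of P, each b_i a positive integer not larger than the number of occurrences of a_i in P, and a_n = 0, the number of pairs in which the element 0 occurs exactly ℓ times in P equals m^{n−1}·ℓ·C(N−1+m−ℓ−1, m−ℓ). -/
section Aux

variable {N : ℕ}

/-- Pairs `(a,b)` with `1 ≤ b ≤ P a` are a sigma of `Fin (P a)`. -/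
def auxE1 (P : Fin N → ℕ) : {p : Fin N × ℕ // 1 ≤ p.2 ∧ p.2 ≤ P p.1} ≃ Σ a : Fin N, Fin (P a) where
  toFun x := ⟨x.1.1, ⟨x.1.2 - 1, by have h1 := x.2.1; have h2 := x.2.2; omega⟩⟩
  invFun y := ⟨(y.1, y.2.1 + 1), Nat.succ_pos _, y.2.isLt⟩
  left_inv x := by
    obtain ⟨⟨a, b⟩, h1, h2⟩ := x
    apply Subtype.ext
    exact congrArg (Prod.mk a) (Nat.sub_add_cancel h1)
  right_inv y := by
    obtain ⟨a, j⟩ := y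
    simp

/-- Pairs `(a,b)` with `1 ≤ b ≤ P a` and `a = z` are a `Fin (P z)`. -/
def auxE2 (P : Fin N → ℕ) (z : Fin N) :
    {p : Fin N × ℕ // (1 ≤ p.2 ∧ p.2 ≤ P p.1) ∧ p.1 = z} ≃ Fin (P z) where
  toFun x := ⟨x.1.2 - 1, by
    have h1 := x.2.1.1; have h2 := x.2.1.2; have h3 := x.2.2; rw [h3] at h2; omega⟩
  invFun j := ⟨(z, j.1 + 1), ⟨⟨Nat.succ_pos _, j.isLt⟩, rfl⟩⟩
  left_inv x := by
    obtain ⟨⟨a, b⟩, ⟨h1, h2⟩, h3⟩ := x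
    subst h3
    apply Subtype.ext
    exact congrArg (Prod.mk a) (Nat.sub_add_cancel h1)
  right_inv j := by
    apply Fin.ext
    simp

/-- Stars and bars. -/
theorem card_tuple (k s : ℕ) :
    Nat.card {Q : Fin k → ℕ // ∑ x, Q x = s} = (k + s - 1).choose s := by
  have e : {Q : Fin k → ℕ // ∑ x, Q x = s} ≃ {μ : Multiset (Fin k) // Multiset.card μ = s} := by
    refine Equiv.subtypeEquiv
      (Finsupp.equivFunOnFinite.symm.trans Multiset.toFinsupp.symm.toEquiv) fun Q => ?_
    have : Multiset.card ((Multiset.toFinsupp.symm.toEquiv)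
        (Finsupp.equivFunOnFinite.symm Q)) = ∑ x, Q x := by
      simp [Multiset.toFinsupp, Finsupp.card_toMultiset,
        Finsupp.sum_fintype, Finsupp.equivFunOnFinite]
      rfl
    simp only [Equiv.trans_apply, this]
  have e2 : {μ : Multiset (Fin k) // Multiset.card μ = s} ≃ Sym (Fin k) s := Equiv.refl _
  rw [Nat.card_congr (e.trans e2), Nat.card_eq_fintype_card, Sym.card_sym_eq_multichoose,
    Fintype.card_fin, Nat.multichoose_eq]

theorem card_subP (N' m ℓ : ℕ) (hℓm : ℓ ≤ m) :
    Nat.card {P : Fin (N' + 1) → ℕ // (∑ x, P x) = m ∧ P 0 = ℓ} =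
      (N' + m - ℓ - 1).choose (m - ℓ) := by
  have e : {P : Fin (N' + 1) → ℕ // (∑ x, P x) = m ∧ P 0 = ℓ} ≃
      {Q : Fin N' → ℕ // ∑ x, Q x = m - ℓ} := {
    toFun := fun P => ⟨fun a => P.1 a.succ, by
      have h := P.2.1
      have h2 := P.2.2
      rw [Fin.sum_univ_succ] at h
      show (∑ x : Fin N', P.1 x.succ) = m - ℓ
      omega⟩
    invFun := fun Q => ⟨Fin.cases ℓ Q.1, by
      constructor
      · rw [Fin.sum_univ_succ]
        simp only [Fin.cases_zero, Fin.cases_succ]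
        have := Q.2
        omega
      · simp⟩
    left_inv := fun P => by
      apply Subtype.ext
      funext a
      refine Fin.cases ?_ (fun i => ?_) a
      · simp [P.2.2]
      · simp
    right_inv := fun Q => by
      apply Subtype.ext
      funext a
      simp }
  rw [Nat.card_congr e, card_tuple]
  congr 1
  omega

end Aux

/-- among the pairs `(P, S)` as above, those in which the
distinguished element `0` occurs exactly `ℓ` times in `P` number
`m^{n−1}·ℓ·C(N−1+m−ℓ−1, m−ℓ)`. -/
theorem count_pairs_multiset_sequence_with_zero_multiplicity
    (n N m ℓ : ℕ) (hn : 1 ≤ n) (hN : 1 ≤ N) (hm : 1 ≤ m) (hℓ : 1 ≤ ℓ) (hℓm : ℓ ≤ m) :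
    Nat.card {PS : (Fin N → ℕ) × (Fin n → Fin N × ℕ) //
        (∑ x, PS.1 x) = m ∧
        (∀ i, 1 ≤ (PS.2 i).2 ∧ (PS.2 i).2 ≤ PS.1 (PS.2 i).1) ∧
        (PS.2 ⟨n - 1, by omega⟩).1 = ⟨0, by omega⟩ ∧
        PS.1 ⟨0, by omega⟩ = ℓ} =
      m ^ (n - 1) * ℓ * (N - 1 + m - ℓ - 1).choose (m - ℓ) := by
  obtain ⟨N', rfl⟩ : ∃ N', N = N' + 1 := ⟨N - 1, by omega⟩
  set last : Fin n := ⟨n - 1, by omega⟩ with hlast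
  have hz : (⟨0, by omega⟩ : Fin (N' + 1)) = 0 := rfl
  rw [hz]
  set subP := {P : Fin (N' + 1) → ℕ // (∑ x, P x) = m ∧ P 0 = ℓ} with hsubP
  -- per-P equivalence for the sequences
  have eC : ∀ (P : subP) (i : Fin n),
      {p : Fin (N' + 1) × ℕ // (1 ≤ p.2 ∧ p.2 ≤ P.1 p.1) ∧ (i = last → p.1 = 0)} ≃
        Fin (if i = last then ℓ else m) := by
    intro P i
    by_cases hi : i = last
    · have hc : P.1 0 = if i = last then ℓ else m := by rw [if_pos hi]; exact P.2.2
      exact ((Equiv.subtypeEquivRight (fun p => by simp [hi])).trans (auxE2 P.1 0)).trans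
        (finCongr hc)
    · have hcard : Fintype.card ((a : Fin (N' + 1)) × Fin (P.1 a)) = m := by
        rw [Fintype.card_sigma]
        simp only [Fintype.card_fin]
        exact P.2.1
      have hc : m = if i = last then ℓ else m := by rw [if_neg hi]
      exact ((Equiv.subtypeEquivRight (fun p => by simp [hi])).trans
        ((auxE1 P.1).trans (Fintype.equivFinOfCardEq hcard))).trans (finCongr hc)
  have eS : ∀ P : subP,
      {S : Fin n → Fin (N' + 1) × ℕ //
        (∀ i, 1 ≤ (S i).2 ∧ (S i).2 ≤ P.1 (S i).1) ∧ (S last).1 = 0} ≃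
        (∀ i : Fin n, Fin (if i = last then ℓ else m)) := by
    intro P
    refine (Equiv.subtypeEquivRight (fun S => ?_)).trans
      (Equiv.subtypePiEquivPi.trans (Equiv.piCongrRight fun i => eC P i))
    constructor
    · rintro ⟨h1, h2⟩ i
      exact ⟨h1 i, fun hi => hi ▸ h2⟩
    · intro h
      exact ⟨fun i => (h i).1, (h last).2 rfl⟩
  have key : {PS : (Fin (N' + 1) → ℕ) × (Fin n → Fin (N' + 1) × ℕ) //
        (∑ x, PS.1 x) = m ∧
        (∀ i, 1 ≤ (PS.2 i).2 ∧ (PS.2 i).2 ≤ PS.1 (PS.2 i).1) ∧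
        (PS.2 last).1 = 0 ∧
        PS.1 0 = ℓ} ≃ subP × (∀ i : Fin n, Fin (if i = last then ℓ else m)) := by
    refine Equiv.trans ?_ ((Equiv.sigmaCongrRight eS).trans (Equiv.sigmaEquivProd _ _))
    exact {
      toFun := fun x => ⟨⟨x.1.1, x.2.1, x.2.2.2.2⟩, ⟨x.1.2, x.2.2.1, x.2.2.2.1⟩⟩
      invFun := fun y => ⟨(y.1.1, y.2.1), y.1.2.1, y.2.2.1, y.2.2.2, y.1.2.2⟩
      left_inv := fun _ => rfl
      right_inv := fun _ => rfl }
  rw [Nat.card_congr key, Nat.card_prod, Nat.card_pi]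
  have h1 : Nat.card subP = (N' + 1 - 1 + m - ℓ - 1).choose (m - ℓ) := by
    rw [card_subP N' m ℓ hℓm, show N' + 1 - 1 + m - ℓ - 1 = N' + m - ℓ - 1 from by omega]
  have h2 : (∏ i : Fin n, Nat.card (Fin (if i = last then ℓ else m))) = ℓ * m ^ (n - 1) := by
    simp only [Nat.card_eq_fintype_card, Fintype.card_fin]
    rw [Fintype.prod_eq_mul_prod_compl last, if_pos rfl]
    congr 1
    rw [Finset.prod_congr rfl (fun i hi => if_neg (by simpa using hi)),
      Finset.prod_const, Finset.card_compl, Fintype.card_fin, Finset.card_singleton]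
  rw [h1, h2]
  ring
end
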